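/- Let (X,d,W) be a UCW-hyperbolic space with monotone modulus of uniform convexity η, C ⊆ X a nonempty convex subset, T : C → C nonexpansive with a fixed point, (λ_n) a sequence in [0,1], and (x_n) the Krasnoselski–Mann iteration starting with x ∈ C. Suppose θ : ℕ → ℕ is a rate of divergence for Σ_{n=0}^∞ λ_n(1−λ_n), and b > 0 satisfies b ≥ d(x,p) for some fixed point p of T. Then lim_{n→∞} d(x_n, Tx_n) = 0, and for all ε > 0 and all n ≥ Φ(ε,η,b,θ) one has d(x_n, Tx_n) < ε, where Φ(ε,η,b,θ) := θ(⌈(b+1)/(ε·η(b, ε/b))⌉) if ε ≤ 2b and Φ(ε,η,b,θ) := 0 otherwise. -/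

import Mathlib

open Set Filter Metric Bornology Function

/-- A `W`-hyperbolic space structure on a metric space `X` (Kohlenbach).
`W x y l` denotes `(1-l)x ⊕ l y`. -/
structure WHyp (X : Type*) [MetricSpace X] where
  W : X → X → ℝ → X
  W1 : ∀ (x y z : X), ∀ l ∈ Set.Icc (0:ℝ) 1,
    dist z (W x y l) ≤ (1 - l) * dist z x + l * dist z y
  W2 : ∀ (x y : X), ∀ l ∈ Set.Icc (0:ℝ) 1, ∀ l' ∈ Set.Icc (0:ℝ) 1,
    dist (W x y l) (W x y l') = |l - l'| * dist x y
  W3 : ∀ (x y : X), ∀ l ∈ Set.Icc (0:ℝ) 1, W x y l = W y x (1 - l)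
  W4 : ∀ (x y z w : X), ∀ l ∈ Set.Icc (0:ℝ) 1,
    dist (W x z l) (W y w l) ≤ (1 - l) * dist x y + l * dist z w

/-- `η` is a modulus of uniform convexity for the `W`-hyperbolic space `H`. -/
def WHyp.UnifConvex {X : Type*} [MetricSpace X] (H : WHyp X) (η : ℝ → ℝ → ℝ) : Prop :=
  (∀ r ε : ℝ, 0 < r → ε ∈ Set.Ioc (0:ℝ) 2 → η r ε ∈ Set.Ioc (0:ℝ) 1) ∧
  (∀ (r ε : ℝ) (a x y : X), 0 < r → ε ∈ Set.Ioc (0:ℝ) 2 →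
    dist x a ≤ r → dist y a ≤ r → ε * r ≤ dist x y →
    dist (H.W x y (1/2)) a ≤ (1 - η r ε) * r)

/-- A modulus of uniform convexity is monotone if it decreases in `r` for fixed `ε`. -/
def MonotoneModulus (η : ℝ → ℝ → ℝ) : Prop :=
  ∀ r s ε : ℝ, 0 < r → r ≤ s → ε ∈ Set.Ioc (0:ℝ) 2 → η s ε ≤ η r ε

/-- A subset `C` is convex in the `W`-hyperbolic space `H`. -/
def WHyp.ConvexSet {X : Type*} [MetricSpace X] (H : WHyp X) (C : Set X) : Prop :=
  ∀ x ∈ C, ∀ y ∈ C, ∀ l ∈ Set.Icc (0:ℝ) 1, H.W x y l ∈ C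

/-- The Krasnoselski–Mann iteration: `x₀ = x`, `x_{n+1} = (1-λ_n)x_n ⊕ λ_n T x_n`. -/
def WHyp.kmSeq {X : Type*} [MetricSpace X] (H : WHyp X) (T : X → X) (l : ℕ → ℝ)
    (x : X) : ℕ → X
  | 0 => x
  | n + 1 => H.W (H.kmSeq T l x n) (T (H.kmSeq T l x n)) (l n)

/-- The bound `h(ε,k,η,b,θ)` from Proposition 4.4 of the paper. -/
noncomputable def hRate (η : ℝ → ℝ → ℝ) (b : ℝ) (θ : ℕ → ℕ) (ε : ℝ) (k : ℕ) : ℕ :=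
  if ε ≤ 2 * b then θ (⌈(b + 1) / (ε * η b (ε / b))⌉₊ + k) else k

/-! Uniform convexity extends from midpoints to every `λ`, with `η` replaced by `2λ(1 - λ)η`: for
`λ ≤ 1/2` the point `(1 - λ)x ⊕ λy` lies `2λ` of the way from `x` to the midpoint, because uniform
convexity forces a point at prescribed distances `λ d(x,y)`, `(1 - λ) d(x,y)` from `x` and `y` to be
unique.

Along the iteration neither the distance to a fixed point `p` nor the displacement `d(xₙ, T xₙ)`
increases. While the displacement stays above `ε`, uniform convexity makes the
distance to `p` drop by at least `λₙ(1 - λₙ) · ε · η(b, ε/b)` at each step; since it starts below `b`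
and the series `∑ λₙ(1 - λₙ)` reaches `(b + 1)/(ε η(b, ε/b))` by stage `θ(⌈(b + 1)/(ε η(b, ε/b))⌉)`,
the displacement must have fallen below `ε` by then. -/

namespace WHyp

variable {X : Type*} [MetricSpace X] (H : WHyp X)

lemma W_zero (x y : X) : H.W x y 0 = x := by
  have h := H.W1 x y x 0 (left_mem_Icc.2 zero_le_one)
  exact (dist_le_zero.1 (by simpa using h)).symm

lemma W_one (x y : X) : H.W x y 1 = y := by
  rw [H.W3 x y 1 (right_mem_Icc.2 zero_le_one), sub_self, W_zero]

lemma dist_W_left (x y : X) {l : ℝ} (hl : l ∈ Icc (0 : ℝ) 1) :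
    dist x (H.W x y l) = l * dist x y := by
  have h := H.W2 x y 0 (left_mem_Icc.2 zero_le_one) l hl
  rw [W_zero, zero_sub, abs_neg, abs_of_nonneg hl.1] at h
  exact h

lemma dist_W_right (x y : X) {l : ℝ} (hl : l ∈ Icc (0 : ℝ) 1) :
    dist (H.W x y l) y = (1 - l) * dist x y := by
  have h := H.W2 x y l hl 1 (right_mem_Icc.2 zero_le_one)
  rw [W_one, abs_sub_comm, abs_of_nonneg (sub_nonneg.2 hl.2)] at h
  exact h

lemma dist_W_le_of_dist_le {y z p : X} {l : ℝ} (hl : l ∈ Icc (0 : ℝ) 1)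
    (hzy : dist z p ≤ dist y p) : dist (H.W y z l) p ≤ dist y p := by
  have h := H.W1 y z p l hl
  rw [dist_comm p, dist_comm p y, dist_comm p z] at h
  nlinarith [hl.1]

variable {H} {η : ℝ → ℝ → ℝ}

namespace UnifConvex

lemma dist_W_half_lt (hU : H.UnifConvex η) {a w c : X} {r : ℝ} (hw : dist w a ≤ r)
    (hc : dist c a ≤ r) (hwc : w ≠ c) : dist (H.W w c (1 / 2)) a < r := by
  have hwc' : dist w c ≤ 2 * r := by linarith [dist_triangle_right w c a]
  have hr : 0 < r := by linarith [dist_pos.2 hwc]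
  have hε : dist w c / r ∈ Ioc (0 : ℝ) 2 :=
    ⟨div_pos (dist_pos.2 hwc) hr, (div_le_iff₀ hr).2 hwc'⟩
  have h := hU.2 r _ a w c hr hε hw hc (div_mul_cancel₀ _ hr.ne').le
  nlinarith [(hU.1 r _ hr hε).1]

/-- The midpoint of two distinct common points would lie strictly inside both balls. -/
lemma subsingleton_closedBall_inter (hU : H.UnifConvex η) {x y : X} {r s : ℝ}
    (hrs : r + s ≤ dist x y) : (closedBall x r ∩ closedBall y s).Subsingleton := by
  rintro w ⟨hwx, hwy⟩ c ⟨hcx, hcy⟩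
  by_contra hwc
  have hx := hU.dist_W_half_lt hwx hcx hwc
  have hy := hU.dist_W_half_lt hwy hcy hwc
  linarith [dist_triangle_left x y (H.W w c (1 / 2))]

lemma W_eq_W_W_half (hU : H.UnifConvex η) (x y : X) {l : ℝ} (hl0 : 0 ≤ l) (hl : l ≤ 1 / 2) :
    H.W x y l = H.W x (H.W x y (1 / 2)) (2 * l) := by
  have hlI : l ∈ Icc (0 : ℝ) 1 := ⟨hl0, by linarith⟩
  have h2lI : 2 * l ∈ Icc (0 : ℝ) 1 := ⟨by linarith, by linarith⟩
  have hhalf : (1 / 2 : ℝ) ∈ Icc (0 : ℝ) 1 := ⟨by norm_num, by norm_num⟩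
  set m := H.W x y (1 / 2)
  refine hU.subsingleton_closedBall_inter (r := l * dist x y) (s := (1 - l) * dist x y)
    (by linarith) ⟨?_, ?_⟩ ⟨?_, ?_⟩
  · rw [mem_closedBall, dist_comm, H.dist_W_left x y hlI]
  · rw [mem_closedBall, H.dist_W_right x y hlI]
  · rw [mem_closedBall, dist_comm, H.dist_W_left x m h2lI, H.dist_W_left x y hhalf]
    linarith
  · calc dist (H.W x m (2 * l)) y ≤ dist (H.W x m (2 * l)) m + dist m y := dist_triangle _ _ _
      _ = (1 - l) * dist x y := by
        rw [H.dist_W_right x m h2lI, H.dist_W_left x y hhalf, H.dist_W_right x y hhalf]; ring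

lemma dist_W_le_of_le_half (hU : H.UnifConvex η) {r ε : ℝ} (hr : 0 < r)
    (hε : ε ∈ Ioc (0 : ℝ) 2) {a x y : X} (hx : dist x a ≤ r) (hy : dist y a ≤ r)
    (hxy : ε * r ≤ dist x y) {l : ℝ} (hl0 : 0 ≤ l) (hl : l ≤ 1 / 2) :
    dist (H.W x y l) a ≤ (1 - 2 * l * (1 - l) * η r ε) * r := by
  have hη := (hU.1 r ε hr hε).1
  have hm := hU.2 r ε a x y hr hε hx hy hxy
  have h := H.W1 x (H.W x y (1 / 2)) a (2 * l) ⟨by linarith, by linarith⟩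
  rw [dist_comm a, dist_comm a x, dist_comm a] at h
  rw [hU.W_eq_W_W_half x y hl0 hl]
  calc _ ≤ (1 - 2 * l) * r + 2 * l * ((1 - η r ε) * r) :=
        h.trans (add_le_add (by gcongr; linarith) (by gcongr))
    _ ≤ (1 - 2 * l * (1 - l) * η r ε) * r := by
        nlinarith [mul_nonneg (mul_nonneg hl0 hl0) (mul_pos hη hr).le]

lemma dist_W_le (hU : H.UnifConvex η) {r ε : ℝ} (hr : 0 < r) (hε : ε ∈ Ioc (0 : ℝ) 2)
    {a x y : X} (hx : dist x a ≤ r) (hy : dist y a ≤ r) (hxy : ε * r ≤ dist x y) {l : ℝ}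
    (hl : l ∈ Icc (0 : ℝ) 1) : dist (H.W x y l) a ≤ (1 - 2 * l * (1 - l) * η r ε) * r := by
  rcases le_or_gt l (1 / 2) with h | h
  · exact hU.dist_W_le_of_le_half hr hε hx hy hxy hl.1 h
  · have h' := hU.dist_W_le_of_le_half hr hε hy hx (by rwa [dist_comm]) (l := 1 - l)
      (by linarith [hl.2]) (by linarith)
    rw [H.W3 x y l hl]
    linarith

lemma dist_W_le_sub (hU : H.UnifConvex η) (hmon : MonotoneModulus η) {b ε : ℝ} (hb : 0 < b)
    (hε : 0 < ε) (hεb : ε ≤ 2 * b) {y z p : X} (hyp : dist y p ≤ b) (hzy : dist z p ≤ dist y p)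
    (hεyz : ε ≤ dist y z) {l : ℝ} (hl : l ∈ Icc (0 : ℝ) 1) :
    dist (H.W y z l) p ≤ dist y p - l * (1 - l) * (ε * η b (ε / b)) := by
  set r := dist y p
  have hεr : ε ≤ 2 * r := by linarith [dist_triangle_right y z p]
  have hr : 0 < r := by linarith
  have hεb' : ε / b ∈ Ioc (0 : ℝ) 2 := ⟨div_pos hε hb, (div_le_iff₀ hb).2 (by linarith)⟩
  have hxy : ε / b * r ≤ dist y z :=
    calc ε / b * r ≤ ε / b * b := by gcongr
      _ = ε := div_mul_cancel₀ _ hb.ne'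
      _ ≤ dist y z := hεyz
  have hη : η b (ε / b) ≤ η r (ε / b) := hmon r b _ hr hyp hεb'
  have hll : 0 ≤ l * (1 - l) := mul_nonneg hl.1 (sub_nonneg.2 hl.2)
  have hηb := (hU.1 b _ hb hεb').1
  calc dist (H.W y z l) p ≤ (1 - 2 * l * (1 - l) * η r (ε / b)) * r :=
        hU.dist_W_le hr hεb' le_rfl hzy hxy hl
    _ = r - l * (1 - l) * (η r (ε / b) * (2 * r)) := by ring
    _ ≤ r - l * (1 - l) * (ε * η b (ε / b)) := by
        rw [mul_comm ε]
        gcongr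
        exact hηb.le.trans hη

end UnifConvex

variable {C : Set X} {T : X → X} {l : ℕ → ℝ} {x p : X}

lemma kmSeq_mem (hC : H.ConvexSet C) (hT : MapsTo T C C) (hl : ∀ n, l n ∈ Icc (0 : ℝ) 1)
    (hx : x ∈ C) (n : ℕ) : H.kmSeq T l x n ∈ C := by
  induction n with
  | zero => exact hx
  | succ n ih => exact hC _ ih _ (hT ih) _ (hl n)

lemma antitone_dist_kmSeq_self (hC : H.ConvexSet C) (hT : MapsTo T C C)
    (hTne : ∀ x ∈ C, ∀ y ∈ C, dist (T x) (T y) ≤ dist x y) (hl : ∀ n, l n ∈ Icc (0 : ℝ) 1)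
    (hx : x ∈ C) : Antitone fun n ↦ dist (H.kmSeq T l x n) (T (H.kmSeq T l x n)) := by
  refine antitone_nat_of_succ_le fun n ↦ ?_
  set y := H.kmSeq T l x n
  have hy' : H.kmSeq T l x (n + 1) = H.W y (T y) (l n) := rfl
  have hT' := hTne _ (kmSeq_mem hC hT hl hx n) _ (kmSeq_mem hC hT hl hx (n + 1))
  rw [hy'] at hT' ⊢
  calc dist (H.W y (T y) (l n)) (T (H.W y (T y) (l n)))
      ≤ dist (H.W y (T y) (l n)) (T y) + dist (T y) (T (H.W y (T y) (l n))) := dist_triangle _ _ _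
    _ ≤ (1 - l n) * dist y (T y) + l n * dist y (T y) := by
        rw [H.dist_W_right _ _ (hl n), ← H.dist_W_left _ _ (hl n)]
        gcongr
    _ = dist y (T y) := by ring

lemma dist_map_le_of_isFixedPt (hTne : ∀ x ∈ C, ∀ y ∈ C, dist (T x) (T y) ≤ dist x y)
    (hpC : p ∈ C) (hTp : T p = p) {y : X} (hy : y ∈ C) : dist (T y) p ≤ dist y p := by
  simpa only [hTp] using hTne y hy p hpC

lemma antitone_dist_kmSeq_fixedPoint (hC : H.ConvexSet C) (hT : MapsTo T C C)
    (hTne : ∀ x ∈ C, ∀ y ∈ C, dist (T x) (T y) ≤ dist x y) (hl : ∀ n, l n ∈ Icc (0 : ℝ) 1)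
    (hx : x ∈ C) (hpC : p ∈ C) (hTp : T p = p) : Antitone fun n ↦ dist (H.kmSeq T l x n) p :=
  antitone_nat_of_succ_le fun n ↦ H.dist_W_le_of_dist_le (hl n)
    (dist_map_le_of_isFixedPt hTne hpC hTp (kmSeq_mem hC hT hl hx n))

lemma dist_kmSeq_fixedPoint_le_sub_sum (hU : H.UnifConvex η)
    (hmon : MonotoneModulus η) (hC : H.ConvexSet C) (hT : MapsTo T C C)
    (hTne : ∀ x ∈ C, ∀ y ∈ C, dist (T x) (T y) ≤ dist x y) (hl : ∀ n, l n ∈ Icc (0 : ℝ) 1)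
    (hx : x ∈ C) (hpC : p ∈ C) (hTp : T p = p) {b ε : ℝ} (hb : 0 < b) (hxp : dist x p ≤ b)
    (hε : 0 < ε) (hεb : ε ≤ 2 * b) {N : ℕ}
    (hN : ∀ m ≤ N, ε ≤ dist (H.kmSeq T l x m) (T (H.kmSeq T l x m))) :
    dist (H.kmSeq T l x (N + 1)) p ≤
      dist x p - (∑ i ∈ Finset.range (N + 1), l i * (1 - l i)) * (ε * η b (ε / b)) := by
  have hfej := antitone_dist_kmSeq_fixedPoint hC hT hTne hl hx hpC hTp
  have hstep : ∀ m ∈ Finset.range (N + 1),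
      dist (H.kmSeq T l x (m + 1)) p - dist (H.kmSeq T l x m) p ≤
        -(l m * (1 - l m) * (ε * η b (ε / b))) := by
    intro m hm
    have := hU.dist_W_le_sub hmon hb hε hεb ((hfej m.zero_le).trans hxp)
      (dist_map_le_of_isFixedPt hTne hpC hTp (kmSeq_mem hC hT hl hx m))
      (hN m (Nat.lt_succ_iff.1 (Finset.mem_range.1 hm))) (hl m)
    change dist (H.W _ _ _) p - _ ≤ _
    linarith
  have h := Finset.sum_le_sum hstep
  rw [Finset.sum_range_sub (fun m ↦ dist (H.kmSeq T l x m) p), Finset.sum_neg_distrib,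
    ← Finset.sum_mul] at h
  change _ - dist x p ≤ _ at h
  linarith

lemma dist_kmSeq_self_lt_of_hRate_le (hU : H.UnifConvex η)
    (hmon : MonotoneModulus η) (hC : H.ConvexSet C) (hT : MapsTo T C C)
    (hTne : ∀ x ∈ C, ∀ y ∈ C, dist (T x) (T y) ≤ dist x y) (hl : ∀ n, l n ∈ Icc (0 : ℝ) 1)
    (hx : x ∈ C) (hpC : p ∈ C) (hTp : T p = p) {θ : ℕ → ℕ}
    (hθ : ∀ n : ℕ, (n : ℝ) ≤ ∑ i ∈ Finset.range (θ n + 1), l i * (1 - l i)) {b : ℝ} (hb : 0 < b)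
    (hxp : dist x p ≤ b) {ε : ℝ} (hε : 0 < ε) {n : ℕ} (hn : hRate η b θ ε 0 ≤ n) :
    dist (H.kmSeq T l x n) (T (H.kmSeq T l x n)) < ε := by
  by_cases hεb : ε ≤ 2 * b
  · set K := ⌈(b + 1) / (ε * η b (ε / b))⌉₊
    have hθK : θ K ≤ n := by simpa only [hRate, hεb, if_true, add_zero] using hn
    by_contra! hge
    have hreg := antitone_dist_kmSeq_self hC hT hTne hl hx
    have hdrop := dist_kmSeq_fixedPoint_le_sub_sum hU hmon hC hT hTne hl hx hpC hTp hb hxp hε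
      hεb (N := θ K) fun m hm ↦ hge.trans (hreg (hm.trans hθK))
    have hpos : 0 < ε * η b (ε / b) :=
      mul_pos hε (hU.1 b _ hb ⟨div_pos hε hb, (div_le_iff₀ hb).2 (by linarith)⟩).1
    have hsum : b + 1 ≤ (∑ i ∈ Finset.range (θ K + 1), l i * (1 - l i)) * (ε * η b (ε / b)) :=
      (div_le_iff₀ hpos).1 ((Nat.le_ceil _).trans (hθ K))
    linarith [dist_nonneg (x := H.kmSeq T l x (θ K + 1)) (y := p)]
  · have hnp : dist (H.kmSeq T l x n) p ≤ b :=
      (antitone_dist_kmSeq_fixedPoint hC hT hTne hl hx hpC hTp n.zero_le).trans hxp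
    calc _ ≤ dist (H.kmSeq T l x n) p + dist (T (H.kmSeq T l x n)) p := dist_triangle_right _ _ _
      _ ≤ 2 * b := by
        linarith [dist_map_le_of_isFixedPt hTne hpC hTp (kmSeq_mem hC hT hl hx n)]
      _ < ε := not_le.1 hεb

end WHyp

theorem stmt17_general {X : Type*} [MetricSpace X] (H : WHyp X)
    (η : ℝ → ℝ → ℝ) (hU : H.UnifConvex η) (hmon : MonotoneModulus η)
    (C : Set X) (hCconv : H.ConvexSet C)
    (T : X → X) (hT : Set.MapsTo T C C)
    (hTne : ∀ x ∈ C, ∀ y ∈ C, dist (T x) (T y) ≤ dist x y)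
    (l : ℕ → ℝ) (hl : ∀ n, l n ∈ Set.Icc (0:ℝ) 1)
    (x : X) (hx : x ∈ C) (xs : ℕ → X) (hxs : xs = H.kmSeq T l x)
    (θ : ℕ → ℕ)
    (hθ : ∀ n : ℕ, (n : ℝ) ≤ ∑ i ∈ Finset.range (θ n + 1), l i * (1 - l i))
    (b : ℝ) (hb : 0 < b) (hbp : ∃ p ∈ C, T p = p ∧ dist x p ≤ b) :
    Filter.Tendsto (fun n => dist (xs n) (T (xs n))) Filter.atTop (nhds 0) ∧
    ∀ ε : ℝ, 0 < ε → ∀ n, hRate η b θ ε 0 ≤ n → dist (xs n) (T (xs n)) < ε := by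
  subst hxs
  obtain ⟨p, hpC, hTp, hxp⟩ := hbp
  have hrate : ∀ ε : ℝ, 0 < ε → ∀ n, hRate η b θ ε 0 ≤ n →
      dist (H.kmSeq T l x n) (T (H.kmSeq T l x n)) < ε := fun ε hε n hn ↦
    WHyp.dist_kmSeq_self_lt_of_hRate_le hU hmon hCconv hT hTne hl hx hpC hTp hθ hb hxp hε hn
  refine ⟨Metric.tendsto_atTop.2 fun ε hε ↦ ⟨hRate η b θ ε 0, fun n hn ↦ ?_⟩, hrate⟩
  rw [Real.dist_0_eq_abs, abs_of_nonneg dist_nonneg]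
  exact hrate ε hε n hn

theorem stmt17 {X : Type*} [MetricSpace X] (H : WHyp X)
    (η : ℝ → ℝ → ℝ) (hU : H.UnifConvex η) (hmon : MonotoneModulus η)
    (C : Set X) (hCne : C.Nonempty) (hCconv : H.ConvexSet C)
    (T : X → X) (hT : Set.MapsTo T C C)
    (hTne : ∀ x ∈ C, ∀ y ∈ C, dist (T x) (T y) ≤ dist x y)
    (l : ℕ → ℝ) (hl : ∀ n, l n ∈ Set.Icc (0:ℝ) 1)
    (x : X) (hx : x ∈ C) (xs : ℕ → X) (hxs : xs = H.kmSeq T l x)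
    (θ : ℕ → ℕ)
    (hθ : ∀ n : ℕ, (n : ℝ) ≤ ∑ i ∈ Finset.range (θ n + 1), l i * (1 - l i))
    (b : ℝ) (hb : 0 < b) (hbp : ∃ p ∈ C, T p = p ∧ dist x p ≤ b) :
    Filter.Tendsto (fun n => dist (xs n) (T (xs n))) Filter.atTop (nhds 0) ∧
    ∀ ε : ℝ, 0 < ε → ∀ n, hRate η b θ ε 0 ≤ n → dist (xs n) (T (xs n)) < ε :=
  stmt17_general H η hU hmon C hCconv T hT hTne l hl x hx xs hxs θ hθ b hb hbp
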